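/- If f : ℂ*_ℚ → ℂ is continuous, then each I_n(f) is continuous, the family {I_n(f) : n ≥ 1} is equicontinuous, and I_n(f) converges to f uniformly on every compact subset of ℂ*_ℚ along the divisibility net (for every compact C ⊆ ℂ*_ℚ and ε > 0 there is N such that sup_{x∈C} |f(x) − I_n(f)(x)| < ε whenever N ∣ n). -/

import Mathlib

open Complex Real Filter MeasureTheory

noncomputable section

/-- The profinite completion of `ℤ`: the inverse limit of the groups `ZMod n`
over the divisibility order. -/
def Zhat : Type :=
  {a : (n : ℕ+) → ZMod n //
    ∀ (n k : ℕ+), ZMod.castHom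
        (show ((n : ℕ+) : ℕ) ∣ ((n * k : ℕ+) : ℕ) by
          rw [PNat.mul_coe]; exact dvd_mul_right _ _)
        (ZMod n) (a (n * k)) = a n}

instance (n : ℕ) : TopologicalSpace (ZMod n) := ⊥

instance : TopologicalSpace Zhat := by unfold Zhat; infer_instance

instance : MeasurableSpace Zhat := borel _

instance : Zero Zhat := ⟨⟨fun _ => 0, fun _ _ => map_zero _⟩⟩

instance : Add Zhat :=
  ⟨fun a b => ⟨fun n => a.1 n + b.1 n, fun n k => by rw [map_add, a.2 n k, b.2 n k]⟩⟩

/-- The canonical inclusion `ℤ → ẑ`. -/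
def iotaZ (k : ℤ) : Zhat := ⟨fun n => (k : ZMod n), fun n m => by rw [map_intCast]⟩

/-- Multiplication by a natural number on `ẑ`. -/
def nsmulZ (c : ℕ) (a : Zhat) : Zhat :=
  ⟨fun n => (c : ZMod n) * a.1 n, fun n k => by rw [map_mul, map_natCast, a.2 n k]⟩

lemma exp_real_mul_I_norm (θ : ℝ) : ‖Complex.exp ((θ : ℂ) * Complex.I)‖ = 1 := by
  rw [Complex.norm_exp_ofReal_mul_I]

lemma exp_div_pow (θ : ℝ) (n k : ℕ+) :
    Complex.exp (((θ / (((n * k : ℕ+) : ℕ)) : ℝ) : ℂ) * Complex.I) ^ ((k : ℕ+) : ℕ)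
      = Complex.exp (((θ / ((n : ℕ+) : ℕ) : ℝ) : ℂ) * Complex.I) := by
  rw [← Complex.exp_nat_mul]
  congr 1
  have hn : (((n : ℕ+) : ℕ) : ℂ) ≠ 0 := by exact_mod_cast n.ne_zero
  have hk : (((k : ℕ+) : ℕ) : ℂ) ≠ 0 := by exact_mod_cast k.ne_zero
  rw [PNat.mul_coe]
  push_cast
  field_simp

lemma exp_div_powC (w : ℂ) (n k : ℕ+) :
    Complex.exp (w / (((n * k : ℕ+) : ℕ) : ℂ)) ^ ((k : ℕ+) : ℕ)
      = Complex.exp (w / (((n : ℕ+) : ℕ) : ℂ)) := by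
  rw [← Complex.exp_nat_mul]
  congr 1
  have hn : (((n : ℕ+) : ℕ) : ℂ) ≠ 0 := by exact_mod_cast n.ne_zero
  have hk : (((k : ℕ+) : ℕ) : ℂ) ≠ 0 := by exact_mod_cast k.ne_zero
  rw [PNat.mul_coe]
  push_cast
  field_simp

lemma exp_natCast_congr (n : ℕ+) (A B : ℕ)
    (h : (A : ZMod ((n : ℕ+) : ℕ)) = (B : ZMod ((n : ℕ+) : ℕ))) :
    Complex.exp (((2 * π * A / ((n : ℕ+) : ℕ) : ℝ) : ℂ) * Complex.I)
      = Complex.exp (((2 * π * B / ((n : ℕ+) : ℕ) : ℝ) : ℂ) * Complex.I) := by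
  rw [ZMod.natCast_eq_natCast_iff] at h
  obtain ⟨j, hj⟩ := Nat.modEq_iff_dvd.mp h
  have hn : ((((n : ℕ+) : ℕ) : ℝ)) ≠ 0 := by exact_mod_cast n.ne_zero
  have hB : (B : ℝ) = (A : ℝ) + (((n : ℕ+) : ℕ) : ℝ) * (j : ℝ) := by
    have : (B : ℤ) = (A : ℤ) + (((n : ℕ+) : ℕ) : ℤ) * j := by linarith [hj]
    exact_mod_cast congrArg (fun t : ℤ => (t : ℝ)) this
  have key : ((2 * π * B / ((n : ℕ+) : ℕ) : ℝ) : ℂ) * Complex.I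
      = ((2 * π * A / ((n : ℕ+) : ℕ) : ℝ) : ℂ) * Complex.I + (j : ℂ) * (2 * (π : ℂ) * Complex.I) := by
    have hnC : ((((n : ℕ+) : ℕ) : ℂ)) ≠ 0 := by exact_mod_cast n.ne_zero
    push_cast [hB]
    field_simp
  rw [key, Complex.exp_add, Complex.exp_int_mul_two_pi_mul_I, mul_one]

/-- The component at level `n` of the canonical map `ẑ → S¹_ℚ`,
`l ↦ e^{2πil/n}`. -/
def phiComp (a : Zhat) (n : ℕ+) : ℂ :=
  Complex.exp (((2 * π * ((a.1 n).val : ℕ) / ((n : ℕ+) : ℕ) : ℝ) : ℂ) * Complex.I)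

lemma phiComp_pow (a : Zhat) (n k : ℕ+) : phiComp a (n * k) ^ ((k : ℕ+) : ℕ) = phiComp a n := by
  unfold phiComp
  rw [exp_div_pow]
  haveI : NeZero (((n * k : ℕ+) : ℕ)) := ⟨(n * k).ne_zero⟩
  haveI : NeZero (((n : ℕ+) : ℕ)) := ⟨n.ne_zero⟩
  apply exp_natCast_congr
  have h := a.2 n k
  rw [ZMod.castHom_apply] at h
  rw [ZMod.natCast_val, ZMod.natCast_val, ZMod.cast_id, h]

/-- The adelic solenoid `S¹_ℚ`: the inverse limit of the circles
`S¹ = {z ∈ ℂ : ‖z‖ = 1}` under the covering maps `z ↦ z^{m/n}` for `n ∣ m`. -/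
def SolQ : Type :=
  {z : ℕ+ → ℂ // (∀ n, ‖z n‖ = 1) ∧ ∀ (n k : ℕ+), z (n * k) ^ ((k : ℕ+) : ℕ) = z n}

instance : TopologicalSpace SolQ := by unfold SolQ; infer_instance
instance : MeasurableSpace SolQ := borel _

instance : Mul SolQ :=
  ⟨fun x y => ⟨fun n => x.1 n * y.1 n,
    ⟨fun n => by rw [norm_mul, x.2.1 n, y.2.1 n, one_mul],
     fun n k => by rw [mul_pow, x.2.2 n k, y.2.2 n k]⟩⟩⟩

instance : One SolQ := ⟨⟨fun _ => 1, ⟨fun _ => norm_one, fun _ _ => one_pow _⟩⟩⟩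

/-- The canonical homomorphism `φ : ẑ → S¹_ℚ`, induced componentwise by
`l ↦ e^{2πil/n}`. -/
def phiS (a : Zhat) : SolQ :=
  ⟨fun n => phiComp a n, ⟨fun n => exp_real_mul_I_norm _, phiComp_pow a⟩⟩

/-- The baseleaf `ν : ℝ → S¹_ℚ`, `ν(t) = (e^{it/n})ₙ`. -/
def nuS (t : ℝ) : SolQ :=
  ⟨fun n => Complex.exp (((t / ((n : ℕ+) : ℕ) : ℝ) : ℂ) * Complex.I),
   ⟨fun n => exp_real_mul_I_norm _, fun n k => exp_div_pow t n k⟩⟩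

/-- `exp : ẑ × ℝ → S¹_ℚ`, `exp(a, θ) = φ(a)·ν(θ)`. -/
def expS (p : Zhat × ℝ) : SolQ := phiS p.1 * nuS p.2

/-- The algebraic solenoid `ℂ*_ℚ`: the inverse limit of copies of `ℂ* = ℂ \ {0}`
under the covering maps `z ↦ z^{m/n}` for `n ∣ m`. -/
def CSolQ : Type :=
  {z : ℕ+ → ℂ // (∀ n, z n ≠ 0) ∧ ∀ (n k : ℕ+), z (n * k) ^ ((k : ℕ+) : ℕ) = z n}

instance : TopologicalSpace CSolQ := by unfold CSolQ; infer_instance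
instance : MeasurableSpace CSolQ := borel _

instance : Mul CSolQ :=
  ⟨fun x y => ⟨fun n => x.1 n * y.1 n,
    ⟨fun n => mul_ne_zero (x.2.1 n) (y.2.1 n),
     fun n k => by rw [mul_pow, x.2.2 n k, y.2.2 n k]⟩⟩⟩

instance : One CSolQ := ⟨⟨fun _ => 1, ⟨fun _ => one_ne_zero, fun _ _ => one_pow _⟩⟩⟩

/-- The canonical homomorphism `φ : ẑ → ℂ*_ℚ`. -/
def phiC (a : Zhat) : CSolQ :=
  ⟨fun n => phiComp a n, ⟨fun n => Complex.exp_ne_zero _, phiComp_pow a⟩⟩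

/-- The baseleaf `ν : ℂ → ℂ*_ℚ`, `ν(z) = (e^{iz/n})ₙ`. -/
def nuC (z : ℂ) : CSolQ :=
  ⟨fun n => Complex.exp (Complex.I * z / (((n : ℕ+) : ℕ) : ℂ)),
   ⟨fun n => Complex.exp_ne_zero _, fun n k => exp_div_powC (Complex.I * z) n k⟩⟩

/-- `exp : ẑ × ℂ → ℂ*_ℚ`, `exp(a, z) = φ(a)·ν(z)`. -/
def expC (a : Zhat) (z : ℂ) : CSolQ := phiC a * nuC z

/-- The `n`-th power map on the Riemann sphere `Ĉ = ℂ ∪ {∞}`, with `∞ ↦ ∞`. -/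
def spherePow (k : ℕ) (x : OnePoint ℂ) : OnePoint ℂ :=
  Option.map (fun z : ℂ => z ^ k) x

/-- The adelic Riemann sphere `Ĉ_ℚ`: the inverse limit of Riemann spheres under
the branched covering maps `z ↦ z^{m/n}` for `n ∣ m`. -/
def SphereQ : Type :=
  {z : ℕ+ → OnePoint ℂ // ∀ (n k : ℕ+), spherePow ((k : ℕ+) : ℕ) (z (n * k)) = z n}

instance : TopologicalSpace SphereQ := by unfold SphereQ; infer_instance

/-- The leaf maps `exp(a, ·) : ℂ → ℂ*_ℚ ⊂ Ĉ_ℚ` of the adelic Riemann sphere. -/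
def expSph (a : Zhat) (z : ℂ) : SphereQ :=
  ⟨fun n => OnePoint.some (phiComp a n * Complex.exp (Complex.I * z / (((n : ℕ+) : ℕ) : ℂ))),
   fun n k => by
     show OnePoint.some ((phiComp a (n * k) * _) ^ ((k : ℕ+) : ℕ)) = _
     rw [mul_pow, phiComp_pow, exp_div_powC]⟩

/-- The renormalization operator `I_n` on functions on `ℂ*_ℚ`:
the average of `μ` over the fiber `π_n⁻¹(π_n(x))`, namely
`I_n(μ)(x) = ∫_{ẑ} μ(φ(n·a)·x) dη(a)`. -/
def Iren (η : Measure Zhat) (n : ℕ+) (f : CSolQ → ℂ) (x : CSolQ) : ℂ :=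
  ∫ a : Zhat, f (phiC (nsmulZ ((n : ℕ+) : ℕ) a) * x) ∂η

/-- The renormalization operator `I_n` on functions on `S¹_ℚ`. -/
def IrenS (η : Measure Zhat) (n : ℕ+) (f : SolQ → ℂ) (x : SolQ) : ℂ :=
  ∫ a : Zhat, f (phiS (nsmulZ ((n : ℕ+) : ℕ) a) * x) ∂η

/-- The character `χ_q = (π_n)^m : S¹_ℚ → S¹` associated to a rational `q = m/n`. -/
def chiQ (q : ℚ) (x : SolQ) : ℂ := (x.1 ⟨q.den, q.den_pos⟩) ^ q.num

/-- A function `f : ℝ → ℂ` is limit periodic if for every `ε > 0` there is a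
positive integer `N` such that `|f(x + 2πn) − f(x)| < ε` for all `x ∈ ℝ` and
all integers `n ∈ Nℤ`. -/
def LimitPeriodic (f : ℝ → ℂ) : Prop :=
  ∀ ε : ℝ, 0 < ε → ∃ N : ℕ+, ∀ x : ℝ, ∀ n : ℤ, ((N : ℕ+) : ℤ) ∣ n →
    ‖f (x + 2 * π * n) - f x‖ < ε

/-- A function `f : ℂ → ℂ` is limit periodic with respect to `x` if for every
`ε > 0` and compact `K ⊆ ℝ` there is a positive integer `N` with
`|f(z + 2πn) − f(z)| < ε` for all `z` with `Im z ∈ K` and all `n ∈ Nℤ`. -/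
def LimitPeriodicX (f : ℂ → ℂ) : Prop :=
  ∀ ε : ℝ, 0 < ε → ∀ K : Set ℝ, IsCompact K → ∃ N : ℕ+,
    ∀ z : ℂ, z.im ∈ K → ∀ n : ℤ, ((N : ℕ+) : ℤ) ∣ n →
      ‖f (z + 2 * π * n) - f z‖ < ε

/-
`I_n(f)(x)` averages `f (g * x)` over `g` in the compact set `φ(nẑ) ⊆ φ(ẑ)`. Since
`(x, g) ↦ f (g * x)` is continuous and `φ(ẑ)` is compact, `f (g * x)` depends on `x` with a
modulus of continuity uniform in `g ∈ φ(ẑ)`, and averaging preserves it: this is the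
equicontinuity. The compact sets `φ(nẑ)` shrink along divisibility to `{1}` (the `n`-th
coordinate of every point of `φ(nẑ)` is `1`), so they eventually lie in any neighbourhood of `1`,
on which `f (g * x)` is uniformly close to `f x` for `x` in a compact set.
-/

open Topology

instance (n : ℕ) : DiscreteTopology (ZMod n) := ⟨rfl⟩

instance : CompactSpace Zhat := by
  have hclosed : IsClosed {a : (n : ℕ+) → ZMod n |
      ∀ (n k : ℕ+), ZMod.castHom
        (show ((n : ℕ+) : ℕ) ∣ ((n * k : ℕ+) : ℕ) by
          rw [PNat.mul_coe]; exact dvd_mul_right _ _)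
        (ZMod n) (a (n * k)) = a n} := by
    simp only [Set.ofPred_forall]
    exact isClosed_iInter fun n => isClosed_iInter fun k =>
      isClosed_eq (continuous_of_discreteTopology.comp (continuous_apply _)) (continuous_apply _)
  exact isCompact_iff_compactSpace.mp hclosed.isCompact

instance : BorelSpace Zhat := ⟨rfl⟩

instance : T2Space CSolQ := by unfold CSolQ; infer_instance

lemma CSolQ.continuous_val : Continuous (Subtype.val : CSolQ → ℕ+ → ℂ) :=
  continuous_induced_dom

instance : ContinuousMul CSolQ :=
  ⟨.subtype_mk (continuous_pi fun n =>
    ((continuous_apply n).comp (CSolQ.continuous_val.comp continuous_fst)).mul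
      ((continuous_apply n).comp (CSolQ.continuous_val.comp continuous_snd))) _⟩

protected lemma CSolQ.one_mul (x : CSolQ) : 1 * x = x :=
  Subtype.ext <| funext fun _ => one_mul _

lemma continuous_nsmulZ (c : ℕ) : Continuous (nsmulZ c) :=
  .subtype_mk (continuous_pi fun n =>
    continuous_of_discreteTopology.comp ((continuous_apply n).comp continuous_induced_dom)) _

lemma continuous_phiC : Continuous phiC :=
  .subtype_mk (continuous_pi fun n : ℕ+ =>
    (continuous_of_discreteTopology (f := fun t : ZMod n =>
      Complex.exp (((2 * π * (t.val : ℕ) / ((n : ℕ+) : ℕ) : ℝ) : ℂ) * Complex.I))).comp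
      ((continuous_apply n).comp continuous_induced_dom)) _

lemma nsmulZ_mul (c d : ℕ) (a : Zhat) : nsmulZ (c * d) a = nsmulZ c (nsmulZ d a) :=
  Subtype.ext <| funext fun _ => by
    simp only [nsmulZ, Nat.cast_mul, mul_assoc]

lemma phiC_nsmulZ_apply_self (n : ℕ+) (a : Zhat) : (phiC (nsmulZ (n : ℕ) a)).1 n = 1 := by
  have hzero : (nsmulZ (n : ℕ) a).1 n = 0 := by
    simp only [nsmulZ, ZMod.natCast_self, zero_mul]
  simp [phiC, phiComp, hzero]

def rangePhiNsmul (n : ℕ+) : Set CSolQ := Set.range fun a => phiC (nsmulZ n a)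

lemma isCompact_rangePhiNsmul (n : ℕ+) : IsCompact (rangePhiNsmul n) :=
  isCompact_range (continuous_phiC.comp (continuous_nsmulZ n))

lemma rangePhiNsmul_subset_of_dvd {N n : ℕ+} (hdvd : (N : ℕ) ∣ n) :
    rangePhiNsmul n ⊆ rangePhiNsmul N := by
  obtain ⟨k, hk⟩ := hdvd
  rintro _ ⟨a, rfl⟩
  exact ⟨nsmulZ k a, by simp only [← nsmulZ_mul, ← hk]⟩

lemma eq_one_of_forall_mem_rangePhiNsmul {x : CSolQ} (hx : ∀ n, x ∈ rangePhiNsmul n) :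
    x = 1 :=
  Subtype.ext <| funext fun n => by
    obtain ⟨a, rfl⟩ := hx n
    exact phiC_nsmulZ_apply_self n a

lemma exists_rangePhiNsmul_subset {U : Set CSolQ} (hU : U ∈ 𝓝 1) :
    ∃ N, rangePhiNsmul N ⊆ U := by
  refine exists_subset_nhds_of_isCompact (fun N M => ⟨N * M, ?_, ?_⟩) isCompact_rangePhiNsmul
    fun x hx => eq_one_of_forall_mem_rangePhiNsmul (Set.mem_iInter.mp hx) ▸ hU
  · exact rangePhiNsmul_subset_of_dvd (by simp)
  · exact rangePhiNsmul_subset_of_dvd (by simp)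

section Averages

variable {Ω X G E : Type*} [MeasurableSpace Ω] {μ : Measure Ω} [IsProbabilityMeasure μ]
  [TopologicalSpace X] [TopologicalSpace G] [NormedAddCommGroup E] [NormedSpace ℝ E]

lemma dist_integral_le_of_forall_dist_le {F F' : Ω → E} (hF : Integrable F μ)
    (hF' : Integrable F' μ) {ε : ℝ} (hε : ∀ a, dist (F a) (F' a) ≤ ε) :
    dist (∫ a, F a ∂μ) (∫ a, F' a ∂μ) ≤ ε := by
  rw [dist_eq_norm, ← integral_sub hF hF']
  simpa using norm_integral_le_of_norm_le_const (μ := μ)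
    (.of_forall fun a => (dist_eq_norm (F a) (F' a)).symm ▸ hε a)

lemma equicontinuous_integral_of_mapsTo_compact {ι : Type*} {F : X → G → E}
    (hF : Continuous F.uncurry) {K : Set G} (hK : IsCompact K) {g : ι → Ω → G}
    (hgK : ∀ i a, g i a ∈ K) (hint : ∀ i x, Integrable (fun a => F x (g i a)) μ) :
    Equicontinuous fun i x => ∫ a, F x (g i a) ∂μ := by
  intro x₀
  rw [Metric.equicontinuousAt_iff_right]
  intro ε hε
  obtain ⟨v, hv, hvK⟩ := hK.mem_uniformity_of_prod hF.continuousOn (Set.mem_univ x₀)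
    (Metric.dist_mem_uniformity (half_pos hε))
  rw [nhdsWithin_univ] at hv
  filter_upwards [hv] with x hx i
  calc dist (∫ a, F x₀ (g i a) ∂μ) (∫ a, F x (g i a) ∂μ)
      ≤ ε / 2 := dist_integral_le_of_forall_dist_le (hint i x₀) (hint i x)
        fun a => by rw [dist_comm]; exact (hvK x hx (g i a) (hgK i a)).le
    _ < ε := half_lt_self hε

lemma exists_nhds_forall_dist_integral_lt [CompleteSpace E] {F : X → G → E}
    (hF : Continuous F.uncurry) {C : Set X} (hC : IsCompact C) (g₀ : G) {ε : ℝ} (hε : 0 < ε) :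
    ∃ U ∈ 𝓝 g₀, ∀ g : Ω → G, (∀ a, g a ∈ U) → (∀ x, Integrable (fun a => F x (g a)) μ) →
      ∀ x ∈ C, dist (∫ a, F x (g a) ∂μ) (F x g₀) < ε := by
  obtain ⟨U, hU, hUC⟩ := hC.mem_uniformity_of_prod (f := fun g x => F x g)
    (hF.comp continuous_swap).continuousOn (Set.mem_univ g₀)
    (Metric.dist_mem_uniformity (half_pos hε))
  rw [nhdsWithin_univ] at hU
  refine ⟨U, hU, fun g hgU hint x hx => ?_⟩
  calc dist (∫ a, F x (g a) ∂μ) (F x g₀)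
      = dist (∫ a, F x (g a) ∂μ) (∫ _, F x g₀ ∂μ) := by rw [integral_const]; simp
    _ ≤ ε / 2 := dist_integral_le_of_forall_dist_le (hint x) (integrable_const _)
        fun a => (hUC (g a) (hgU a) x hx).le
    _ < ε := half_lt_self hε

end Averages

section Renormalization

variable (η : Measure Zhat) [IsProbabilityMeasure η] {f : CSolQ → ℂ}

lemma continuous_uncurry_apply_mul (hf : Continuous f) :
    Continuous (fun (x g : CSolQ) => f (g * x)).uncurry :=
  hf.comp (continuous_snd.mul continuous_fst)

lemma integrable_apply_phiC_nsmulZ_mul (hf : Continuous f) (n : ℕ) (x : CSolQ) :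
    Integrable (fun a => f (phiC (nsmulZ n a) * x)) η :=
  (hf.comp ((continuous_phiC.comp (continuous_nsmulZ n)).mul continuous_const)
    ).integrable_of_hasCompactSupport (.of_compactSpace _)

lemma equicontinuous_Iren (hf : Continuous f) : Equicontinuous fun n : ℕ+ => Iren η n f :=
  equicontinuous_integral_of_mapsTo_compact (continuous_uncurry_apply_mul hf)
    (isCompact_rangePhiNsmul 1) (fun _ a => rangePhiNsmul_subset_of_dvd (one_dvd _) ⟨a, rfl⟩)
    fun n => integrable_apply_phiC_nsmulZ_mul η hf n

lemma exists_forall_dist_Iren_lt (hf : Continuous f) {C : Set CSolQ} (hC : IsCompact C)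
    {ε : ℝ} (hε : 0 < ε) :
    ∃ N : ℕ+, ∀ n : ℕ+, (N : ℕ) ∣ n → ∀ x ∈ C, dist (Iren η n f x) (f x) < ε := by
  obtain ⟨U, hU, hUC⟩ := exists_nhds_forall_dist_integral_lt (μ := η)
    (continuous_uncurry_apply_mul hf) hC 1 hε
  obtain ⟨N, hNU⟩ := exists_rangePhiNsmul_subset hU
  refine ⟨N, fun n hdvd x hx => ?_⟩
  have hclose := hUC _ (fun a => hNU (rangePhiNsmul_subset_of_dvd hdvd ⟨a, rfl⟩))
    (integrable_apply_phiC_nsmulZ_mul η hf n) x hx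
  rwa [CSolQ.one_mul] at hclose

end Renormalization

theorem statement16_general (η : Measure Zhat) [IsProbabilityMeasure η]
    (f : CSolQ → ℂ) (hf : Continuous f) :
    (∀ n : ℕ+, Continuous (Iren η n f)) ∧
    Equicontinuous (fun n : ℕ+ => Iren η n f) ∧
    (∀ C : Set CSolQ, IsCompact C → ∀ ε : ℝ, 0 < ε → ∃ N : ℕ+,
      ∀ n : ℕ+, ((N : ℕ+) : ℕ) ∣ ((n : ℕ+) : ℕ) →
        ∀ x ∈ C, ‖f x - Iren η n f x‖ < ε) := by
  have hequi := equicontinuous_Iren η hf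
  refine ⟨hequi.continuous, hequi, fun C hC ε hε => ?_⟩
  obtain ⟨N, hN⟩ := exists_forall_dist_Iren_lt η hf hC hε
  exact ⟨N, fun n hdvd x hx => by simpa only [dist_comm, dist_eq_norm] using hN n hdvd x hx⟩

/-- If `f : ℂ*_ℚ → ℂ` is continuous, then each `I_n(f)` is
continuous, the family `{I_n(f)}` is equicontinuous, and `I_n(f) → f` uniformly
on every compact subset along the divisibility net. -/
theorem statement16 (η : Measure Zhat) [IsProbabilityMeasure η]
    (hη : ∀ b : Zhat, ∀ s : Set Zhat, MeasurableSet s → η ((· + b) ⁻¹' s) = η s)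
    (f : CSolQ → ℂ) (hf : Continuous f) :
    (∀ n : ℕ+, Continuous (Iren η n f)) ∧
    Equicontinuous (fun n : ℕ+ => Iren η n f) ∧
    (∀ C : Set CSolQ, IsCompact C → ∀ ε : ℝ, 0 < ε → ∃ N : ℕ+,
      ∀ n : ℕ+, ((N : ℕ+) : ℕ) ∣ ((n : ℕ+) : ℕ) →
        ∀ x ∈ C, ‖f x - Iren η n f x‖ < ε) :=
  statement16_general η f hf

end
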